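/- arXiv:1404.4420 — 2 statements merged into one kernel-verified Lean document; each statement's English description precedes it below -/
import Mathlib

section
/- Let A ∈ M_N(ℂ) and γ > 0, and set Z = 𝟏_N + iγA. Then Σ_{k=2}^N |σ_k(Z) − σ_k(γA)| ≤ 2γ‖A‖. -/
open Matrix

/-- The decreasingly ordered eigenvalues of the Hermitian matrix `A * Aᴴ`. -/
noncomputable def evalsDesc {N : ℕ} (A : Matrix (Fin N) (Fin N) ℂ) : Fin N → ℝ :=
  fun k =>
    (Matrix.isHermitian_mul_conjTranspose_self A).eigenvalues
      (Tuple.sort (fun i => -(Matrix.isHermitian_mul_conjTranspose_self A).eigenvalues i) k)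

/-- The decreasingly ordered singular values `σ_1(A) ≥ ⋯ ≥ σ_N(A)` of a complex matrix `A`,
i.e. the decreasingly ordered nonnegative square roots of the eigenvalues of `A * Aᴴ`.
Here `svalsDesc A k` is `σ_{k+1}(A)` (indices are 0-based). -/
noncomputable def svalsDesc {N : ℕ} (A : Matrix (Fin N) (Fin N) ℂ) : Fin N → ℝ :=
  fun k => Real.sqrt (evalsDesc A k)

/-- The operator norm (largest singular value) of a complex matrix, realized as the norm of
the induced linear operator on Euclidean space. -/
noncomputable def opNorm {m n : ℕ} (A : Matrix (Fin m) (Fin n) ℂ) : ℝ :=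
  ‖LinearMap.toContinuousLinearMap (Matrix.toEuclideanLin A)‖

/-- The entrywise exponential of a complex matrix. -/
noncomputable def entrywiseExp {m n : ℕ} (A : Matrix (Fin m) (Fin n) ℂ) :
    Matrix (Fin m) (Fin n) ℂ :=
  Matrix.of fun k l => Complex.exp (A k l)

/-- The `N × N` all-ones matrix. -/
def allOnes (N : ℕ) : Matrix (Fin N) (Fin N) ℂ :=
  Matrix.of fun _ _ => (1 : ℂ)

/-!
Write `σ_k` for the singular values. By the Courant–Fischer characterisation, `σ_k(M)` is the
largest `c` such that `‖Mᴴ x‖ ≥ c ‖x‖` on some `k`-dimensional subspace; intersecting that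
subspace with the kernel of `Pᴴ` gives Weyl's interlacing `σ_{k+1}(M + P) ≤ σ_k(M)` for `P` of
rank one, and symmetrically `σ_{k+1}(M) ≤ σ_k(M + P)`. With `m_k = min(σ_k(M + P), σ_k(M))`,
interlacing and monotonicity give `|σ_k(M + P) - σ_k(M)| ≤ m_{k-1} - m_k`, so the tail sum
telescopes to at most `σ_1(M) = ‖M‖`. Take `M = iγA`, whose singular values are those of `γA`,
and `P = 𝟏_N`.
-/

open Module Submodule

namespace OrthonormalBasis

variable {𝕜 E ι : Type*} [RCLike 𝕜] [NormedAddCommGroup E] [InnerProductSpace 𝕜 E] [Fintype ι]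
  {b : OrthonormalBasis ι 𝕜 E} {T : E →ₗ[𝕜] E} {μ : ι → ℝ}

lemma repr_apply_of_apply_eq_smul (hT : ∀ i, T (b i) = (μ i : 𝕜) • b i) (x : E) (i : ι) :
    b.repr (T x) i = μ i * b.repr x i := by
  classical
  conv_lhs => rw [← b.sum_repr x]
  simp [map_sum, map_smul, hT, Finset.sum_apply, Pi.single_apply, RCLike.real_smul_eq_coe_mul,
    mul_comm]

lemma re_inner_apply_eq_sum (hT : ∀ i, T (b i) = (μ i : 𝕜) • b i) (x : E) :
    RCLike.re (inner 𝕜 x (T x)) = ∑ i, μ i * ‖b.repr x i‖ ^ 2 := by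
  rw [← b.repr.inner_map_map, PiLp.inner_apply, map_sum]
  refine Finset.sum_congr rfl fun i _ => ?_
  rw [repr_apply_of_apply_eq_smul hT, RCLike.inner_apply, mul_assoc, RCLike.mul_conj]
  norm_cast

lemma norm_sq_eq_sum_repr (b : OrthonormalBasis ι 𝕜 E) (x : E) :
    ‖x‖ ^ 2 = ∑ i, ‖b.repr x i‖ ^ 2 := by
  rw [← b.repr.norm_map x, EuclideanSpace.norm_sq_eq]

lemma repr_eq_zero_of_mem_span_image {S : Set ι} {x : E} (hx : x ∈ span 𝕜 (b '' S))
    {i : ι} (hi : i ∉ S) : b.repr x i = 0 := by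
  rw [← b.coe_toBasis, Basis.mem_span_image] at hx
  by_contra h
  exact hi (hx (by simpa [b.coe_toBasis_repr_apply] using h))

lemma finrank_span_image (b : OrthonormalBasis ι 𝕜 E) (S : Finset ι) :
    finrank 𝕜 (span 𝕜 (b '' S)) = S.card := by
  rw [Set.image_eq_range, finrank_span_eq_card]
  · simp
  · exact b.orthonormal.linearIndependent.comp _ Subtype.val_injective

lemma re_inner_apply_le_of_mem_span (hT : ∀ i, T (b i) = (μ i : 𝕜) • b i) {S : Set ι} {c : ℝ}
    (hc : ∀ i ∈ S, μ i ≤ c) {x : E} (hx : x ∈ span 𝕜 (b '' S)) :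
    RCLike.re (inner 𝕜 x (T x)) ≤ c * ‖x‖ ^ 2 := by
  rw [re_inner_apply_eq_sum hT, b.norm_sq_eq_sum_repr, Finset.mul_sum]
  refine Finset.sum_le_sum fun i _ => ?_
  by_cases hi : i ∈ S
  · exact mul_le_mul_of_nonneg_right (hc i hi) (by positivity)
  · simp [repr_eq_zero_of_mem_span_image hx hi]

lemma le_re_inner_apply_of_mem_span (hT : ∀ i, T (b i) = (μ i : 𝕜) • b i) {S : Set ι} {c : ℝ}
    (hc : ∀ i ∈ S, c ≤ μ i) {x : E} (hx : x ∈ span 𝕜 (b '' S)) :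
    c * ‖x‖ ^ 2 ≤ RCLike.re (inner 𝕜 x (T x)) := by
  rw [re_inner_apply_eq_sum hT, b.norm_sq_eq_sum_repr, Finset.mul_sum]
  refine Finset.sum_le_sum fun i _ => ?_
  by_cases hi : i ∈ S
  · exact mul_le_mul_of_nonneg_right (hc i hi) (by positivity)
  · simp [repr_eq_zero_of_mem_span_image hx hi]

end OrthonormalBasis

section CourantFischer

variable {𝕜 E : Type*} [RCLike 𝕜] [NormedAddCommGroup E] [InnerProductSpace 𝕜 E] {n : ℕ}
  {b : OrthonormalBasis (Fin n) 𝕜 E} {T : E →ₗ[𝕜] E} {μ : Fin n → ℝ}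

lemma exists_ne_zero_re_inner_apply_le_of_le_finrank (hT : ∀ i, T (b i) = (μ i : 𝕜) • b i)
    (hμ : Antitone μ) {k : Fin n} {W : Submodule 𝕜 E} (hW : k + 1 ≤ finrank 𝕜 W) :
    ∃ x ∈ W, x ≠ 0 ∧ RCLike.re (inner 𝕜 x (T x)) ≤ μ k * ‖x‖ ^ 2 := by
  have := b.toBasis.finiteDimensional_of_finite
  set U := span 𝕜 (b '' (Finset.Ici k : Finset (Fin n)))
  have hU : finrank 𝕜 U = n - k := by rw [b.finrank_span_image, Fin.card_Ici]
  have hE : finrank 𝕜 E = n := by simp [finrank_eq_card_basis b.toBasis]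
  have hWU : W ⊓ U ≠ ⊥ := by
    intro h
    have := finrank_add_finrank_le_of_disjoint (disjoint_iff.mpr h)
    omega
  obtain ⟨x, hx, hx0⟩ := exists_mem_ne_zero_of_ne_bot hWU
  refine ⟨x, (mem_inf.mp hx).1, hx0,
    b.re_inner_apply_le_of_mem_span hT (fun i hi => hμ (by simpa using hi)) (mem_inf.mp hx).2⟩

lemma exists_finrank_eq_le_re_inner_apply (hT : ∀ i, T (b i) = (μ i : 𝕜) • b i)
    (hμ : Antitone μ) (k : Fin n) :
    ∃ V : Submodule 𝕜 E, finrank 𝕜 V = k + 1 ∧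
      ∀ x ∈ V, μ k * ‖x‖ ^ 2 ≤ RCLike.re (inner 𝕜 x (T x)) := by
  refine ⟨span 𝕜 (b '' (Finset.Iic k : Finset (Fin n))),
    by rw [b.finrank_span_image, Fin.card_Iic],
    fun x hx => b.le_re_inner_apply_of_mem_span hT (fun i hi => hμ (by simpa using hi)) hx⟩

end CourantFischer

lemma Matrix.rank_neg {m n R : Type*} [Fintype n] [CommRing R] (A : Matrix m n R) :
    (-A).rank = A.rank := by
  have : (-A).mulVecLin = -A.mulVecLin := LinearMap.ext fun x => by simp
  rw [Matrix.rank, Matrix.rank, this, LinearMap.range_neg]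

/-! `opNorm` is definitionally the norm of the scoped instance `Matrix.Norms.L2Operator`. -/
section L2OpNorm

open scoped Matrix.Norms.L2Operator

variable {m n : ℕ}

lemma opNorm_conjTranspose (A : Matrix (Fin m) (Fin n) ℂ) : opNorm Aᴴ = opNorm A :=
  Matrix.l2_opNorm_conjTranspose A

lemma opNorm_smul (c : ℂ) (A : Matrix (Fin m) (Fin n) ℂ) : opNorm (c • A) = ‖c‖ * opNorm A :=
  norm_smul c A

end L2OpNorm

section SingularValues

variable {N : ℕ}

lemma evalsDesc_antitone (M : Matrix (Fin N) (Fin N) ℂ) : Antitone (evalsDesc M) := by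
  intro i j hij
  simpa [evalsDesc] using Tuple.monotone_sort
    (fun i => -(isHermitian_mul_conjTranspose_self M).eigenvalues i) hij

lemma svalsDesc_antitone (M : Matrix (Fin N) (Fin N) ℂ) : Antitone (svalsDesc M) :=
  fun _ _ hij => Real.sqrt_le_sqrt (evalsDesc_antitone M hij)

lemma sq_svalsDesc (M : Matrix (Fin N) (Fin N) ℂ) (k : Fin N) :
    svalsDesc M k ^ 2 = evalsDesc M k :=
  Real.sq_sqrt (eigenvalues_self_mul_conjTranspose_nonneg M _)

lemma svalsDesc_nonneg (M : Matrix (Fin N) (Fin N) ℂ) (k : Fin N) : 0 ≤ svalsDesc M k :=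
  Real.sqrt_nonneg _

lemma exists_orthonormalBasis_toEuclideanLin_mul_conjTranspose (M : Matrix (Fin N) (Fin N) ℂ) :
    ∃ b : OrthonormalBasis (Fin N) ℂ (EuclideanSpace ℂ (Fin N)),
      ∀ k, toEuclideanLin (M * Mᴴ) (b k) = (evalsDesc M k : ℂ) • b k := by
  set hH := isHermitian_mul_conjTranspose_self M
  refine ⟨hH.eigenvectorBasis.reindex (Tuple.sort fun i => -hH.eigenvalues i).symm, fun k => ?_⟩
  have := hH.mulVec_eigenvectorBasis (Tuple.sort (fun i => -hH.eigenvalues i) k)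
  apply (WithLp.equiv 2 _).injective
  rw [RCLike.real_smul_eq_coe_smul (K := ℂ)] at this
  simp only [OrthonormalBasis.reindex_apply, Equiv.symm_symm, WithLp.equiv_apply, toLpLin_apply,
    WithLp.ofLp_smul]
  exact this

lemma re_inner_toEuclideanLin_mul_conjTranspose (M : Matrix (Fin N) (Fin N) ℂ)
    (x : EuclideanSpace ℂ (Fin N)) :
    RCLike.re (inner ℂ x (toEuclideanLin (M * Mᴴ) x)) = ‖toEuclideanLin Mᴴ x‖ ^ 2 := by
  rw [Matrix.toLpLin_mul_same, LinearMap.comp_apply, toEuclideanLin_conjTranspose_eq_adjoint,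
    ← LinearMap.adjoint_inner_left, inner_self_eq_norm_sq]

lemma exists_ne_zero_norm_le_svalsDesc_mul (M : Matrix (Fin N) (Fin N) ℂ) {k : Fin N}
    {W : Submodule ℂ (EuclideanSpace ℂ (Fin N))} (hW : k + 1 ≤ finrank ℂ W) :
    ∃ x ∈ W, x ≠ 0 ∧ ‖toEuclideanLin Mᴴ x‖ ≤ svalsDesc M k * ‖x‖ := by
  obtain ⟨b, hb⟩ := exists_orthonormalBasis_toEuclideanLin_mul_conjTranspose M
  obtain ⟨x, hxW, hx0, hx⟩ :=
    exists_ne_zero_re_inner_apply_le_of_le_finrank hb (evalsDesc_antitone M) hW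
  refine ⟨x, hxW, hx0, (pow_le_pow_iff_left₀ (norm_nonneg _)
    (mul_nonneg (svalsDesc_nonneg M k) (norm_nonneg x)) two_ne_zero).mp ?_⟩
  rwa [mul_pow, sq_svalsDesc, ← re_inner_toEuclideanLin_mul_conjTranspose]

lemma exists_finrank_eq_svalsDesc_mul_le_norm (M : Matrix (Fin N) (Fin N) ℂ) (k : Fin N) :
    ∃ V : Submodule ℂ (EuclideanSpace ℂ (Fin N)), finrank ℂ V = k + 1 ∧
      ∀ x ∈ V, svalsDesc M k * ‖x‖ ≤ ‖toEuclideanLin Mᴴ x‖ := by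
  obtain ⟨b, hb⟩ := exists_orthonormalBasis_toEuclideanLin_mul_conjTranspose M
  obtain ⟨V, hV, hVμ⟩ := exists_finrank_eq_le_re_inner_apply hb (evalsDesc_antitone M) k
  refine ⟨V, hV, fun x hx => (pow_le_pow_iff_left₀
    (mul_nonneg (svalsDesc_nonneg M k) (norm_nonneg x)) (norm_nonneg _) two_ne_zero).mp ?_⟩
  rw [mul_pow, sq_svalsDesc, ← re_inner_toEuclideanLin_mul_conjTranspose]
  exact hVμ x hx

lemma finrank_ker_toEuclideanLin_add_rank (P : Matrix (Fin N) (Fin N) ℂ) :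
    finrank ℂ (LinearMap.ker (toEuclideanLin P)) + P.rank = N := by
  rw [rank_eq_finrank_range_toLin P (EuclideanSpace.basisFun (Fin N) ℂ).toBasis
    (EuclideanSpace.basisFun (Fin N) ℂ).toBasis, ← toEuclideanLin_eq_toLin_orthonormal, add_comm,
    LinearMap.finrank_range_add_finrank_ker, finrank_euclideanSpace_fin]

open scoped ComplexOrder in
/-- Weyl's inequality for a perturbation of rank at most `r`. -/
theorem svalsDesc_add_le_of_rank_le {M P : Matrix (Fin N) (Fin N) ℂ} {r : ℕ} (hP : P.rank ≤ r)
    {i j : Fin N} (hij : (i : ℕ) + r ≤ j) : svalsDesc (M + P) j ≤ svalsDesc M i := by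
  obtain ⟨V, hV, hVσ⟩ := exists_finrank_eq_svalsDesc_mul_le_norm (M + P) j
  have hK := finrank_ker_toEuclideanLin_add_rank Pᴴ
  rw [rank_conjTranspose] at hK
  have hVK : (i : ℕ) + 1 ≤ finrank ℂ ↥(V ⊓ LinearMap.ker (toEuclideanLin Pᴴ)) := by
    have := finrank_sup_add_finrank_inf_eq V (LinearMap.ker (toEuclideanLin Pᴴ))
    have := (V ⊔ LinearMap.ker (toEuclideanLin Pᴴ)).finrank_le
    rw [finrank_euclideanSpace_fin] at this
    omega
  obtain ⟨x, hx, hx0, hxσ⟩ := exists_ne_zero_norm_le_svalsDesc_mul M hVK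
  have hPx : toEuclideanLin (M + P)ᴴ x = toEuclideanLin Mᴴ x := by
    rw [conjTranspose_add, map_add, LinearMap.add_apply, (mem_inf.mp hx).2, add_zero]
  refine le_of_mul_le_mul_right ?_ (norm_pos_iff.mpr hx0)
  calc svalsDesc (M + P) j * ‖x‖ ≤ ‖toEuclideanLin (M + P)ᴴ x‖ := hVσ x (mem_inf.mp hx).1
    _ ≤ svalsDesc M i * ‖x‖ := hPx ▸ hxσ

lemma svalsDesc_le_opNorm (M : Matrix (Fin N) (Fin N) ℂ) (k : Fin N) :
    svalsDesc M k ≤ opNorm M := by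
  obtain ⟨V, hV, hVσ⟩ := exists_finrank_eq_svalsDesc_mul_le_norm M k
  obtain ⟨x, hx, hx0⟩ := exists_mem_ne_zero_of_ne_bot (p := V) (by
    rintro rfl
    simp at hV)
  refine le_of_mul_le_mul_right ((hVσ x hx).trans ?_) (norm_pos_iff.mpr hx0)
  calc ‖toEuclideanLin Mᴴ x‖ ≤ opNorm Mᴴ * ‖x‖ :=
        (LinearMap.toContinuousLinearMap (toEuclideanLin Mᴴ)).le_opNorm x
    _ = opNorm M * ‖x‖ := by rw [opNorm_conjTranspose]

lemma svalsDesc_eq_of_mul_conjTranspose_eq {M₁ M₂ : Matrix (Fin N) (Fin N) ℂ}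
    (h : M₁ * M₁ᴴ = M₂ * M₂ᴴ) : svalsDesc M₁ = svalsDesc M₂ := by
  have key : ∀ (H : Matrix (Fin N) (Fin N) ℂ) (hH : H.IsHermitian), H = M₂ * M₂ᴴ →
      hH.eigenvalues = (isHermitian_mul_conjTranspose_self M₂).eigenvalues := by
    rintro _ _ rfl
    rfl
  funext k
  simp only [svalsDesc, evalsDesc, key _ _ h]

lemma svalsDesc_smul_eq_of_norm_eq (M : Matrix (Fin N) (Fin N) ℂ) {c d : ℂ} (h : ‖c‖ = ‖d‖) :
    svalsDesc (c • M) = svalsDesc (d • M) := by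
  refine svalsDesc_eq_of_mul_conjTranspose_eq ?_
  rw [conjTranspose_smul, conjTranspose_smul, smul_mul_smul_comm, smul_mul_smul_comm,
    Complex.star_def, Complex.mul_conj', Complex.mul_conj', h]

end SingularValues

lemma rank_allOnes_le (N : ℕ) : (allOnes N).rank ≤ 1 := by
  have : allOnes N = vecMulVec (fun _ => 1) (fun _ => 1) := by
    ext
    simp [allOnes, vecMulVec]
  exact this ▸ Matrix.rank_vecMulVec_le _ _

lemma sum_abs_sub_succ_le_of_interlace {n : ℕ} {a b : Fin (n + 1) → ℝ} (ha : Antitone a)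
    (hb : Antitone b) (hab : ∀ i : Fin n, a i.succ ≤ b i.castSucc)
    (hba : ∀ i : Fin n, b i.succ ≤ a i.castSucc) :
    ∑ i : Fin n, |a i.succ - b i.succ| ≤
      min (a 0) (b 0) - min (a (Fin.last n)) (b (Fin.last n)) := by
  let m (i : Fin (n + 1)) := min (a i) (b i)
  have step (i : Fin n) : |a i.succ - b i.succ| ≤ m i.castSucc - m i.succ := by
    have hi := Fin.castSucc_le_succ i
    have : max (a i.succ) (b i.succ) ≤ m i.castSucc :=
      max_le (le_min (ha hi) (hab i)) (le_min (hba i) (hb hi))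
    rw [← max_sub_min_eq_abs']
    exact sub_le_sub_right this _
  have telescope : ∑ i : Fin n, (m i.castSucc - m i.succ) = m 0 - m (Fin.last n) := by
    have := Fin.sum_univ_succ m
    have := Fin.sum_univ_castSucc m
    rw [Finset.sum_sub_distrib]
    linarith
  exact (Finset.sum_le_sum fun i _ => step i).trans telescope.le

theorem sum_abs_svalsDesc_add_sub_le_of_rank_le_one {n : ℕ}
    {M P : Matrix (Fin (n + 1)) (Fin (n + 1)) ℂ} (hP : P.rank ≤ 1) :
    ∑ i : Fin n, |svalsDesc (M + P) i.succ - svalsDesc M i.succ| ≤ opNorm M := by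
  have hMP (i : Fin n) : svalsDesc (M + P) i.succ ≤ svalsDesc M i.castSucc :=
    svalsDesc_add_le_of_rank_le hP (by simp)
  have hM (i : Fin n) : svalsDesc M i.succ ≤ svalsDesc (M + P) i.castSucc := by
    simpa using svalsDesc_add_le_of_rank_le (M := M + P) ((rank_neg P).trans_le hP)
      (i := i.castSucc) (j := i.succ) (by simp)
  have hlast := le_min (svalsDesc_nonneg (M + P) (Fin.last n)) (svalsDesc_nonneg M (Fin.last n))
  calc _ ≤ _ :=
        sum_abs_sub_succ_le_of_interlace (svalsDesc_antitone _) (svalsDesc_antitone _) hMP hM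
    _ ≤ svalsDesc M 0 := by linarith [min_le_right (svalsDesc (M + P) 0) (svalsDesc M 0)]
    _ ≤ opNorm M := svalsDesc_le_opNorm M 0

lemma sum_filter_val_pos_eq_sum_succ {β : Type*} [AddCommMonoid β] {n : ℕ} (f : Fin (n + 1) → β) :
    ∑ k ∈ Finset.univ.filter (fun k : Fin (n + 1) => 0 < (k : ℕ)), f k = ∑ i : Fin n, f i.succ := by
  rw [Finset.sum_filter, Fin.sum_univ_succ]
  simp

/-- for `A ∈ M_N(ℂ)` and `γ > 0`, with `Z = 𝟏_N + iγA`,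
`Σ_{k=2}^N |σ_k(Z) − σ_k(γA)| ≤ 2γ‖A‖`.  (The sum runs over all indices except the
first, i.e. over 0-based indices `k` with `0 < k`.) -/
theorem sum_abs_svals_tail_linearization {N : ℕ}
    (A : Matrix (Fin N) (Fin N) ℂ) (γ : ℝ) (hγ0 : 0 < γ) :
    ∑ k ∈ Finset.univ.filter (fun k : Fin N => 0 < (k : ℕ)),
        |svalsDesc (allOnes N + (Complex.I * (γ : ℂ)) • A) k - svalsDesc ((γ : ℂ) • A) k|
      ≤ 2 * γ * opNorm A := by
  have hA : 0 ≤ opNorm A := norm_nonneg _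
  cases N with
  | zero => simpa using mul_nonneg (mul_nonneg zero_le_two hγ0.le) hA
  | succ n =>
    have hI : svalsDesc ((Complex.I * γ) • A) = svalsDesc ((γ : ℂ) • A) :=
      svalsDesc_smul_eq_of_norm_eq A (by simp)
    rw [← hI, sum_filter_val_pos_eq_sum_succ, add_comm (allOnes _)]
    calc _ ≤ opNorm ((Complex.I * γ) • A) :=
          sum_abs_svalsDesc_add_sub_le_of_rank_le_one (rank_allOnes_le _)
      _ = γ * opNorm A := by
        rw [opNorm_smul, norm_mul, Complex.norm_I, one_mul, Complex.norm_real,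
          Real.norm_of_nonneg hγ0.le]
      _ ≤ 2 * γ * opNorm A := by nlinarith
end

section
/- Let A ∈ M_N(ℂ) and 0 < γ < 1, and set X = exp_∘(iγA). Then the largest singular value of X/γ satisfies | σ_1(X/γ) / (N/γ) − 1 | ≤ γ ( γ exp(‖A‖) + ‖A‖ ). -/
open Matrix

/-! Entrywise, `exp (iγa) = 1 + iγa + r` with `|r| ≤ γ² e^{|a|}` (compare the exponential series
termwise), so `X = J + iγA + E`, where `J` is the all-ones matrix and `E` has entries bounded by
`γ² e^{‖A‖}`. Bounding the operator norm by the Frobenius norm gives `‖E‖ ≤ N γ² e^{‖A‖}`, and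
`‖J‖ = N` since `Jᴴ J = N J`. As `σ₁` is the operator norm, the reverse triangle inequality yields
`|σ₁(X) - N| ≤ N γ² e^{‖A‖} + γ ‖A‖`. -/

open scoped Matrix.Norms.L2Operator Nat

namespace Real

theorem exp_sub_one_sub_eq_tsum (x : ℝ) :
    exp x - 1 - x = ∑' n : ℕ, x ^ (n + 2) / (n + 2)! := by
  have h := (summable_pow_div_factorial x).sum_add_tsum_nat_add 2
  rw [exp_eq_exp_ℝ, NormedSpace.exp_eq_tsum_div]
  beta_reduce
  rw [← h, Finset.sum_range_succ, Finset.sum_range_one]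
  simp [add_sub_assoc]

theorem exp_mul_sub_one_sub_le {γ t : ℝ} (hγ0 : 0 ≤ γ) (hγ1 : γ ≤ 1) (ht : 0 ≤ t) :
    exp (γ * t) - 1 - γ * t ≤ γ ^ 2 * (exp t - 1 - t) := by
  have hs (x : ℝ) : Summable fun n : ℕ => x ^ (n + 2) / (n + 2)! :=
    (summable_pow_div_factorial x).comp_injective (add_left_injective 2)
  rw [exp_sub_one_sub_eq_tsum, exp_sub_one_sub_eq_tsum, ← tsum_mul_left]
  refine (hs _).tsum_le_tsum (fun n => ?_) ((hs t).mul_left _)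
  rw [mul_pow, mul_div_assoc]
  gcongr ?_ * _
  exact pow_le_pow_of_le_one hγ0 hγ1 (by omega)

end Real

theorem Complex.norm_exp_mul_sub_one_sub_le {γ : ℝ} (hγ0 : 0 ≤ γ) (hγ1 : γ ≤ 1) (z : ℂ) :
    ‖exp (γ * z) - 1 - γ * z‖ ≤ γ ^ 2 * Real.exp ‖z‖ := by
  calc ‖exp (γ * z) - 1 - γ * z‖
      ≤ Real.exp (γ * ‖z‖) - 1 - γ * ‖z‖ := by
        simpa [Finset.sum_range_succ, abs_of_nonneg hγ0, sub_sub] using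
          norm_exp_sub_sum_le_exp_norm_sub_sum (γ * z) 2
    _ ≤ γ ^ 2 * (Real.exp ‖z‖ - 1 - ‖z‖) := Real.exp_mul_sub_one_sub_le hγ0 hγ1 (norm_nonneg z)
    _ ≤ γ ^ 2 * Real.exp ‖z‖ := by gcongr; linarith [norm_nonneg z]

namespace Matrix

variable {𝕜 m n : Type*} [RCLike 𝕜] [Fintype m] [Fintype n] [DecidableEq n]

theorem norm_entry_le_l2_opNorm (A : Matrix m n 𝕜) (i : m) (j : n) : ‖A i j‖ ≤ ‖A‖ := by
  have h := A.l2_opNorm_mulVec (EuclideanSpace.single j 1)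
  calc ‖A i j‖ = ‖(EuclideanSpace.equiv m 𝕜).symm (A *ᵥ EuclideanSpace.single j 1) i‖ := by
        simp
    _ ≤ ‖(EuclideanSpace.equiv m 𝕜).symm (A *ᵥ EuclideanSpace.single j 1)‖ := PiLp.norm_apply_le _ _
    _ ≤ ‖A‖ := by simpa using h

theorem l2_opNorm_sq_le_sum_norm_entry_sq (A : Matrix m n 𝕜) :
    ‖A‖ ^ 2 ≤ ∑ i, ∑ j, ‖A i j‖ ^ 2 := by
  set S := ∑ i, ∑ j, ‖A i j‖ ^ 2
  have hS : 0 ≤ S := by positivity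
  suffices ‖A‖ ≤ √S by simpa [Real.sq_sqrt hS] using pow_le_pow_left₀ (norm_nonneg A) this 2
  rw [l2_opNorm_def]
  refine ContinuousLinearMap.opNorm_le_bound _ (Real.sqrt_nonneg S) fun x => ?_
  have hrow (i : m) : ‖(A *ᵥ x) i‖ ^ 2 ≤ (∑ j, ‖A i j‖ ^ 2) * ‖x‖ ^ 2 := by
    rw [EuclideanSpace.norm_sq_eq]
    calc ‖(A *ᵥ x) i‖ ^ 2 ≤ (∑ j, ‖A i j‖ * ‖x j‖) ^ 2 := by
          gcongr
          exact (norm_sum_le _ _).trans_eq (by simp [norm_mul])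
      _ ≤ _ := Finset.sum_mul_sq_le_sq_mul_sq _ _ _
  refine (pow_le_pow_iff_left₀ (norm_nonneg _) (by positivity) two_ne_zero).mp ?_
  calc _ = ∑ i, ‖(A *ᵥ x) i‖ ^ 2 := by simp [EuclideanSpace.norm_sq_eq]
    _ ≤ ∑ i, (∑ j, ‖A i j‖ ^ 2) * ‖x‖ ^ 2 := Finset.sum_le_sum fun i _ => hrow i
    _ = (√S * ‖x‖) ^ 2 := by rw [mul_pow, Real.sq_sqrt hS, Finset.sum_mul]

theorem l2_opNorm_le_card_mul_of_norm_entry_le (A : Matrix n n 𝕜) {c : ℝ} (hc : 0 ≤ c)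
    (h : ∀ i j, ‖A i j‖ ≤ c) : ‖A‖ ≤ Fintype.card n * c := by
  refine (pow_le_pow_iff_left₀ (norm_nonneg _) (by positivity) two_ne_zero).mp ?_
  calc ‖A‖ ^ 2 ≤ ∑ i, ∑ j, ‖A i j‖ ^ 2 := A.l2_opNorm_sq_le_sum_norm_entry_sq
    _ ≤ ∑ _i : n, ∑ _j : n, c ^ 2 := by gcongr with i _ j; exact h i j
    _ = (Fintype.card n * c) ^ 2 := by
      simp only [Finset.sum_const, Finset.card_univ, nsmul_eq_mul]; ring

theorem l2_opNorm_of_const_one [Nonempty n] :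
    ‖(of fun _ _ => 1 : Matrix n n 𝕜)‖ = Fintype.card n := by
  set J : Matrix n n 𝕜 := of fun _ _ => 1
  have hJJ : Jᴴ * J = (Fintype.card n : 𝕜) • J := by
    ext i j; simp [J, mul_apply]
  have hJ : ‖J‖ ≠ 0 := by
    rw [norm_ne_zero_iff]
    intro h
    simpa [J] using congrFun (congrFun h (Classical.arbitrary n)) (Classical.arbitrary n)
  have := l2_opNorm_conjTranspose_mul_self J
  rw [hJJ, norm_smul, RCLike.norm_natCast] at this
  exact (mul_right_cancel₀ hJ this).symm

theorem IsHermitian.l2_opNorm_eq_norm_eigenvalues {A : Matrix n n 𝕜} (hA : A.IsHermitian) :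
    ‖A‖ = ‖hA.eigenvalues‖ := by
  conv_lhs => rw [hA.spectral_theorem]
  rw [Unitary.conjStarAlgAut_apply, ← Unitary.coe_star, CStarRing.norm_mul_coe_unitary,
    CStarRing.norm_coe_unitary_mul, l2_opNorm_diagonal]
  simp [Pi.norm_def, Function.comp_def]

end Matrix

theorem opNorm_eq_l2_opNorm {m n : ℕ} (A : Matrix (Fin m) (Fin n) ℂ) : opNorm A = ‖A‖ := rfl

theorem norm_allOnes {N : ℕ} (hN : 0 < N) : ‖allOnes N‖ = N := by
  have : Nonempty (Fin N) := ⟨⟨0, hN⟩⟩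
  simpa [allOnes] using Matrix.l2_opNorm_of_const_one (n := Fin N) (𝕜 := ℂ)

theorem eigenvalues_le_evalsDesc_zero {N : ℕ} (hN : 0 < N) (B : Matrix (Fin N) (Fin N) ℂ)
    (i : Fin N) : (isHermitian_mul_conjTranspose_self B).eigenvalues i ≤ evalsDesc B ⟨0, hN⟩ := by
  set μ := (isHermitian_mul_conjTranspose_self B).eigenvalues
  set σ := Tuple.sort fun i => -μ i
  have h := Tuple.monotone_sort (fun i => -μ i) (Fin.le_def.2 (Nat.zero_le _) : ⟨0, hN⟩ ≤ σ.symm i)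
  simpa [σ, evalsDesc] using h

theorem evalsDesc_zero_eq_l2_opNorm {N : ℕ} (hN : 0 < N) (B : Matrix (Fin N) (Fin N) ℂ) :
    evalsDesc B ⟨0, hN⟩ = ‖B * Bᴴ‖ := by
  have hH := isHermitian_mul_conjTranspose_self B
  rw [hH.l2_opNorm_eq_norm_eigenvalues]
  refine le_antisymm ((Real.le_norm_self _).trans (norm_le_pi_norm hH.eigenvalues _)) ?_
  refine (pi_norm_le_iff_of_nonneg (eigenvalues_self_mul_conjTranspose_nonneg B _)).2 fun i => ?_
  rw [Real.norm_of_nonneg (eigenvalues_self_mul_conjTranspose_nonneg B i)]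
  exact eigenvalues_le_evalsDesc_zero hN B i

theorem svalsDesc_zero_eq_l2_opNorm {N : ℕ} (hN : 0 < N) (B : Matrix (Fin N) (Fin N) ℂ) :
    svalsDesc B ⟨0, hN⟩ = ‖B‖ := by
  rw [svalsDesc, evalsDesc_zero_eq_l2_opNorm, ← star_eq_conjTranspose, CStarRing.norm_self_mul_star,
    Real.sqrt_mul_self (norm_nonneg B)]

theorem norm_entrywiseExp_sub_allOnes_sub_le {N : ℕ} (A : Matrix (Fin N) (Fin N) ℂ) {γ : ℝ}
    (hγ0 : 0 ≤ γ) (hγ1 : γ ≤ 1) :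
    ‖entrywiseExp ((Complex.I * γ) • A) - allOnes N - (Complex.I * γ) • A‖
      ≤ N * (γ ^ 2 * Real.exp ‖A‖) := by
  have hentry (k l : Fin N) :
      ‖(entrywiseExp ((Complex.I * γ) • A) - allOnes N - (Complex.I * γ) • A) k l‖
        ≤ γ ^ 2 * Real.exp ‖A‖ :=
    calc _ = ‖Complex.exp (γ * (Complex.I * A k l)) - 1 - γ * (Complex.I * A k l)‖ := by
          simp only [entrywiseExp, allOnes, Matrix.sub_apply, of_apply, Matrix.smul_apply,
            smul_eq_mul]
          ring_nf
      _ ≤ γ ^ 2 * Real.exp ‖Complex.I * A k l‖ := Complex.norm_exp_mul_sub_one_sub_le hγ0 hγ1 _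
      _ ≤ γ ^ 2 * Real.exp ‖A‖ := by
          gcongr; simpa using Matrix.norm_entry_le_l2_opNorm A k l
  simpa using Matrix.l2_opNorm_le_card_mul_of_norm_entry_le _ (by positivity) hentry

theorem abs_norm_entrywiseExp_sub_le {N : ℕ} (hN : 0 < N) (A : Matrix (Fin N) (Fin N) ℂ)
    {γ : ℝ} (hγ0 : 0 ≤ γ) (hγ1 : γ ≤ 1) :
    |‖entrywiseExp ((Complex.I * γ) • A)‖ - N| ≤ N * (γ ^ 2 * Real.exp ‖A‖) + γ * ‖A‖ := by
  set L := (Complex.I * (γ : ℂ)) • A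
  set X := entrywiseExp L
  have hL : ‖L‖ = γ * ‖A‖ := by simp [L, norm_smul, abs_of_nonneg hγ0]
  calc |‖X‖ - N| = |‖X‖ - ‖allOnes N‖| := by rw [norm_allOnes hN]
    _ ≤ ‖X - allOnes N - L + L‖ := by rw [sub_add_cancel]; exact abs_norm_sub_norm_le _ _
    _ ≤ _ := (norm_add_le _ _).trans <| by
      rw [hL]; gcongr; exact norm_entrywiseExp_sub_allOnes_sub_le A hγ0 hγ1

/-- for `A ∈ M_N(ℂ)` and `0 < γ < 1`, with `X = exp_∘(iγA)`, the largest
singular value of `X/γ` satisfies `|σ_1(X/γ)/(N/γ) − 1| ≤ γ(γ exp(‖A‖) + ‖A‖)`. -/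
theorem largest_sval_entrywiseExp {N : ℕ} (hN : 0 < N)
    (A : Matrix (Fin N) (Fin N) ℂ) (γ : ℝ) (hγ0 : 0 < γ) (hγ1 : γ < 1) :
    |svalsDesc (((γ : ℂ))⁻¹ • entrywiseExp ((Complex.I * (γ : ℂ)) • A)) ⟨0, hN⟩
        / ((N : ℝ) / γ) - 1|
      ≤ γ * (γ * Real.exp (opNorm A) + opNorm A) := by
  set X := entrywiseExp ((Complex.I * (γ : ℂ)) • A)
  have hNpos : (0 : ℝ) < N := by exact_mod_cast hN
  have hN1 : (1 : ℝ) ≤ N := by exact_mod_cast hN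
  have hσ : svalsDesc ((γ : ℂ)⁻¹ • X) ⟨0, hN⟩ / (N / γ) - 1 = (‖X‖ - N) / N := by
    rw [svalsDesc_zero_eq_l2_opNorm, norm_smul, norm_inv, Complex.norm_real,
      Real.norm_of_nonneg hγ0.le]
    field_simp
  rw [hσ, abs_div, abs_of_pos hNpos, div_le_iff₀ hNpos, opNorm_eq_l2_opNorm]
  have hX := abs_norm_entrywiseExp_sub_le hN A hγ0.le hγ1.le
  nlinarith [mul_nonneg hγ0.le (norm_nonneg A)]
end
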